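/- arXiv:1510.02198 — 6 statements merged into one kernel-verified Lean document; each statement's English description precedes it below -/
import Mathlib

section
/- A complex number α is in Z[ω] (where ω = e^{iπ/4}) if and only if α can be written either in the form α = a₀ + a₁·i or in the form α = a₀ + a₁·i + ω, where a₀, a₁ ∈ Z[√2]. -/
noncomputable def omegaC : ℂ := (1 + Complex.I) / (Real.sqrt 2 : ℝ)

/-- The subring Z[√2] of ℝ. -/
def Zrt : Set ℝ := {x | ∃ a b : ℤ, x = (a : ℝ) + (b : ℝ) * Real.sqrt 2}

/-- A complex number α is in Z[ω] iff it can be written as a₀ + a₁ i or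
    a₀ + a₁ i + ω with a₀, a₁ ∈ Z[√2]. -/
theorem stmt0 (α : ℂ) :
    (∃ a₀ a₁ a₂ a₃ : ℤ, α = (a₀ : ℂ) + (a₁ : ℂ) * omegaC + (a₂ : ℂ) * omegaC ^ 2
        + (a₃ : ℂ) * omegaC ^ 3) ↔
    (∃ a₀ a₁ : ℝ, a₀ ∈ Zrt ∧ a₁ ∈ Zrt ∧
      (α = (a₀ : ℂ) + (a₁ : ℂ) * Complex.I ∨
       α = (a₀ : ℂ) + (a₁ : ℂ) * Complex.I + omegaC)) := by
  set s : ℂ := ((Real.sqrt 2 : ℝ) : ℂ) with hs_def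
  have hs2 : s ^ 2 = 2 := by
    rw [hs_def]
    norm_cast
    rw [Real.sq_sqrt] <;> norm_num
  have hs0 : s ≠ 0 := by
    intro h
    rw [h] at hs2; norm_num at hs2
  have hωdef : omegaC = (1 + Complex.I) / s := rfl
  have hω2 : omegaC ^ 2 = Complex.I := by
    rw [hωdef]; field_simp
    linear_combination -Complex.I * hs2 + Complex.I_sq
  have hω3 : omegaC ^ 3 = Complex.I * omegaC := by
    rw [pow_succ, hω2]
  have hs_a : omegaC * (1 - Complex.I) = s := by
    rw [hωdef]; field_simp
    linear_combination -hs2 - Complex.I_sq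
  have hs_b : omegaC * (1 + Complex.I) = Complex.I * s := by
    rw [hωdef]; field_simp
    linear_combination -Complex.I * hs2 + Complex.I_sq
  have h2ω : 2 * omegaC = s * (1 + Complex.I) := by
    rw [hωdef]; field_simp
    linear_combination -(1 + Complex.I) * hs2
  constructor
  · rintro ⟨a₀, a₁, a₂, a₃, h⟩
    rcases Int.even_or_odd (a₁ - a₃) with ⟨m, hm⟩ | ⟨m, hm⟩
    · refine ⟨(a₀ : ℝ) + (m : ℝ) * Real.sqrt 2, (a₂ : ℝ) + ((m + a₃ : ℤ) : ℝ) * Real.sqrt 2,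
        ⟨a₀, m, by push_cast; ring⟩, ⟨a₂, m + a₃, by push_cast; ring⟩, Or.inl ?_⟩
      have ha1 : (a₁ : ℂ) = (a₃ : ℂ) + 2 * (m : ℂ) := by
        have : a₁ = a₃ + 2 * m := by omega
        exact_mod_cast this
      rw [h]; push_cast
      linear_combination (a₂ : ℂ) * hω2 + (a₃ : ℂ) * hω3 + (a₃ : ℂ) * hs_b
        + (m : ℂ) * h2ω + omegaC * ha1
    · refine ⟨(a₀ : ℝ) + (m : ℝ) * Real.sqrt 2, (a₂ : ℝ) + ((m + a₃ : ℤ) : ℝ) * Real.sqrt 2,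
        ⟨a₀, m, by push_cast; ring⟩, ⟨a₂, m + a₃, by push_cast; ring⟩, Or.inr ?_⟩
      have ha1 : (a₁ : ℂ) = (a₃ : ℂ) + 2 * (m : ℂ) + 1 := by
        have : a₁ = a₃ + 2 * m + 1 := by omega
        exact_mod_cast this
      rw [h]; push_cast
      linear_combination (a₂ : ℂ) * hω2 + (a₃ : ℂ) * hω3 + (a₃ : ℂ) * hs_b
        + (m : ℂ) * h2ω + omegaC * ha1
  · rintro ⟨x, y, ⟨p, q, hx⟩, ⟨r, t, hy⟩, hcase | hcase⟩
    · refine ⟨p, q + t, r, t - q, ?_⟩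
      rw [hcase, hx, hy]; push_cast
      linear_combination (-(r : ℂ)) * hω2 - (q : ℂ) * hs_a - (t : ℂ) * hs_b
        + ((q : ℂ) - (t : ℂ)) * hω3
    · refine ⟨p, q + t + 1, r, t - q, ?_⟩
      rw [hcase, hx, hy]; push_cast
      linear_combination (-(r : ℂ)) * hω2 - (q : ℂ) * hs_a - (t : ℂ) * hs_b
        + ((q : ℂ) - (t : ℂ)) * hω3
end

section
/- Let β ∈ Z[√2] with β ≥ 0 and β• ≥ 0, and let n = β•·β ∈ ℤ. If n is prime and n ≡ 1 (mod 8), then there exists α ∈ Z[ω] such that α†·α = β. -/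
/-- `x + y√2` is nonnegative under both embeddings `√2 ↦ ±√2` of `ℤ[√2]` into `ℝ`. -/
def TotallyNonneg (x y : ℤ) : Prop := ∀ s : ℝ, s ^ 2 = 2 → 0 ≤ x + y * s

lemma TotallyNonneg.sq_sub_two_mul_sq_nonneg {x y : ℤ} (h : TotallyNonneg x y) :
    0 ≤ x ^ 2 - 2 * y ^ 2 := by
  have hs : √2 ^ 2 = 2 := Real.sq_sqrt zero_le_two
  have := mul_nonneg (h √2 hs) (h (-√2) (by rw [neg_sq, hs]))
  have key : ((x : ℝ) + y * √2) * (x + y * -√2) = ((x ^ 2 - 2 * y ^ 2 : ℤ) : ℝ) := by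
    push_cast; linear_combination (-(y : ℝ) ^ 2) * hs
  exact_mod_cast key ▸ this

lemma TotallyNonneg.of_mul {c₀ c₁ e₀ e₁ : ℤ}
    (h : TotallyNonneg (c₀ * e₀ + 2 * c₁ * e₁) (c₀ * e₁ + c₁ * e₀))
    (hc : TotallyNonneg c₀ c₁) (hc0 : c₀ ^ 2 - 2 * c₁ ^ 2 ≠ 0) : TotallyNonneg e₀ e₁ := by
  intro s hs
  have hfac : ((c₀ * e₀ + 2 * c₁ * e₁ : ℤ) : ℝ) + (c₀ * e₁ + c₁ * e₀ : ℤ) * s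
      = (c₀ + c₁ * s) * (e₀ + e₁ * s) := by
    push_cast; linear_combination -(c₁ : ℝ) * e₁ * hs
  have hne : (c₀ : ℝ) + c₁ * s ≠ 0 := fun h0 => hc0 <| by
    have : ((c₀ ^ 2 - 2 * c₁ ^ 2 : ℤ) : ℝ) = (c₀ + c₁ * s) * (c₀ - c₁ * s) := by
      push_cast; linear_combination (c₁ : ℝ) ^ 2 * hs
    exact_mod_cast (this.trans (by rw [h0, zero_mul]) : ((c₀ ^ 2 - 2 * c₁ ^ 2 : ℤ) : ℝ) = 0)
  exact nonneg_of_mul_nonneg_right (hfac ▸ h s hs) ((hc s hs).lt_of_ne' hne)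

lemma totallyNonneg_of_sqrt_two {x y : ℤ} (hpos : 0 ≤ (x : ℝ) + y * √2)
    (hneg : 0 ≤ (x : ℝ) - y * √2) : TotallyNonneg x y := by
  intro s hs
  rcases sq_eq_sq_iff_eq_or_eq_neg.mp (hs.trans (Real.sq_sqrt zero_le_two).symm) with rfl | rfl
  · exact hpos
  · rwa [mul_neg, ← sub_eq_add_neg]

/-- Totally positive units of `ℤ[√2]` are squares: `n + e₁√2 = (x₀ + x₁√2)²`. -/
theorem exists_sq_of_sq_sub_two_mul_sq_eq_one (n : ℕ) :
    ∀ e₁ : ℤ, (n : ℤ) ^ 2 - 2 * e₁ ^ 2 = 1 →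
      ∃ x₀ x₁ : ℤ, (n : ℤ) = x₀ ^ 2 + 2 * x₁ ^ 2 ∧ e₁ = 2 * x₀ * x₁ := by
  induction n using Nat.strong_induction_on with
  | _ n ih =>
  -- for `e₁ > 0`, multiply by the unit `3 - 2√2 = (1 - √2)²` to decrease `n`
  have descent : ∀ e₁ : ℤ, 0 < e₁ → (n : ℤ) ^ 2 - 2 * e₁ ^ 2 = 1 →
      ∃ x₀ x₁ : ℤ, (n : ℤ) = x₀ ^ 2 + 2 * x₁ ^ 2 ∧ e₁ = 2 * x₀ * x₁ := by
    intro e₁ he₁ h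
    have hpos : 0 < 3 * (n : ℤ) - 4 * e₁ := by nlinarith
    have hlt : 3 * (n : ℤ) - 4 * e₁ < n := by nlinarith
    obtain ⟨x₀, x₁, h₀, h₁⟩ := ih (3 * n - 4 * e₁).toNat (by omega) (3 * e₁ - 2 * n)
      (by rw [Int.toNat_of_nonneg hpos.le]; linear_combination h)
    rw [Int.toNat_of_nonneg hpos.le] at h₀
    exact ⟨x₀ + 2 * x₁, x₀ + x₁, by linear_combination 3 * h₀ + 4 * h₁,
      by linear_combination 2 * h₀ + 3 * h₁⟩
  intro e₁ h
  rcases lt_trichotomy e₁ 0 with hneg | rfl | hpos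
  · obtain ⟨x₀, x₁, h₀, h₁⟩ := descent (-e₁) (neg_pos.mpr hneg) (by linear_combination h)
    exact ⟨x₀, -x₁, by linear_combination h₀, by linear_combination -h₁⟩
  · exact ⟨1, 0, by nlinarith, by ring⟩
  · exact descent e₁ hpos h

lemma TotallyNonneg.exists_eq_sq {e₀ e₁ : ℤ} (he : TotallyNonneg e₀ e₁)
    (h : e₀ ^ 2 - 2 * e₁ ^ 2 = 1) :
    ∃ x₀ x₁ : ℤ, e₀ = x₀ ^ 2 + 2 * x₁ ^ 2 ∧ e₁ = 2 * x₀ * x₁ := by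
  have hs : √2 ^ 2 = 2 := Real.sq_sqrt zero_le_two
  have h₀ : (0 : ℝ) ≤ e₀ := by
    linarith [he √2 hs, he (-√2) (by rw [neg_sq, hs])]
  lift e₀ to ℕ using (by exact_mod_cast h₀)
  exact exists_sq_of_sq_sub_two_mul_sq_eq_one e₀ e₁ h

lemma ZMod.exists_pow_four_eq_neg_one {p : ℕ} [Fact p.Prime] (h8 : p % 8 = 1) :
    ∃ x : ZMod p, x ^ 4 = -1 := by
  have : NeZero (p - 1) := ⟨by have := (Fact.out : p.Prime).two_le; omega⟩
  have := HasEnoughRootsOfUnity.of_dvd (ZMod p) (show 8 ∣ p - 1 by omega)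
  obtain ⟨ζ, hζ⟩ := HasEnoughRootsOfUnity.exists_primitiveRoot (ZMod p) 8
  exact ⟨ζ, (hζ.pow (by norm_num) (by norm_num : 8 = 4 * 2)).eq_neg_one_of_two_right⟩

instance : Zsqrtd.Nonsquare 2 := ⟨fun n h => by
  have : n ≤ 1 := by nlinarith
  interval_cases n <;> omega⟩

/-- `ℤ[ω]` with `ω⁴ = -1`; `⟨x₀, x₁, x₂, x₃⟩` stands for `x₀ + x₁ω + x₂ω² + x₃ω³`. -/
@[ext] structure ZOmega where
  x0 : ℤ
  x1 : ℤ
  x2 : ℤ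
  x3 : ℤ

namespace ZOmega

instance : Zero ZOmega := ⟨⟨0, 0, 0, 0⟩⟩
instance : One ZOmega := ⟨⟨1, 0, 0, 0⟩⟩
instance : Add ZOmega := ⟨fun a b => ⟨a.x0 + b.x0, a.x1 + b.x1, a.x2 + b.x2, a.x3 + b.x3⟩⟩
instance : Neg ZOmega := ⟨fun a => ⟨-a.x0, -a.x1, -a.x2, -a.x3⟩⟩
instance : Sub ZOmega := ⟨fun a b => ⟨a.x0 - b.x0, a.x1 - b.x1, a.x2 - b.x2, a.x3 - b.x3⟩⟩
instance : Mul ZOmega := ⟨fun a b =>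
  ⟨a.x0 * b.x0 - a.x1 * b.x3 - a.x2 * b.x2 - a.x3 * b.x1,
   a.x0 * b.x1 + a.x1 * b.x0 - a.x2 * b.x3 - a.x3 * b.x2,
   a.x0 * b.x2 + a.x1 * b.x1 + a.x2 * b.x0 - a.x3 * b.x3,
   a.x0 * b.x3 + a.x1 * b.x2 + a.x2 * b.x1 + a.x3 * b.x0⟩⟩
instance : NatCast ZOmega := ⟨fun n => ⟨n, 0, 0, 0⟩⟩
instance : IntCast ZOmega := ⟨fun n => ⟨n, 0, 0, 0⟩⟩

@[simp] lemma zero_def : (0 : ZOmega) = ⟨0, 0, 0, 0⟩ := rfl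
@[simp] lemma one_def : (1 : ZOmega) = ⟨1, 0, 0, 0⟩ := rfl
@[simp] lemma add_def (a b : ZOmega) :
    a + b = ⟨a.x0 + b.x0, a.x1 + b.x1, a.x2 + b.x2, a.x3 + b.x3⟩ := rfl
@[simp] lemma neg_def (a : ZOmega) : -a = ⟨-a.x0, -a.x1, -a.x2, -a.x3⟩ := rfl
@[simp] lemma sub_def (a b : ZOmega) :
    a - b = ⟨a.x0 - b.x0, a.x1 - b.x1, a.x2 - b.x2, a.x3 - b.x3⟩ := rfl
@[simp] lemma mul_def (a b : ZOmega) : a * b =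
    ⟨a.x0 * b.x0 - a.x1 * b.x3 - a.x2 * b.x2 - a.x3 * b.x1,
     a.x0 * b.x1 + a.x1 * b.x0 - a.x2 * b.x3 - a.x3 * b.x2,
     a.x0 * b.x2 + a.x1 * b.x1 + a.x2 * b.x0 - a.x3 * b.x3,
     a.x0 * b.x3 + a.x1 * b.x2 + a.x2 * b.x1 + a.x3 * b.x0⟩ := rfl
lemma natCast_def (n : ℕ) : (n : ZOmega) = ⟨n, 0, 0, 0⟩ := rfl
lemma intCast_def (n : ℤ) : (n : ZOmega) = ⟨n, 0, 0, 0⟩ := rfl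

instance : CommRing ZOmega where
  add_assoc _ _ _ := by ext <;> simp <;> ring
  zero_add _ := by ext <;> simp
  add_zero _ := by ext <;> simp
  add_comm _ _ := by ext <;> simp <;> ring
  neg_add_cancel _ := by ext <;> simp
  sub_eq_add_neg _ _ := by ext <;> simp <;> ring
  mul_assoc _ _ _ := by ext <;> simp <;> ring
  one_mul _ := by ext <;> simp
  mul_one _ := by ext <;> simp
  left_distrib _ _ _ := by ext <;> simp <;> ring
  right_distrib _ _ _ := by ext <;> simp <;> ring
  zero_mul _ := by ext <;> simp
  mul_zero _ := by ext <;> simp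
  mul_comm _ _ := by ext <;> simp <;> ring
  natCast_zero := by ext <;> simp [natCast_def]
  natCast_succ _ := by ext <;> simp [natCast_def]
  intCast_ofNat _ := by ext <;> simp [natCast_def, intCast_def]
  intCast_negSucc _ := by ext <;> simp [natCast_def, intCast_def, Int.negSucc_eq]
  nsmul := nsmulRec
  zsmul := zsmulRec

instance : Nontrivial ZOmega := ⟨⟨0, 1, by simp [ZOmega.ext_iff]⟩⟩

def ω : ZOmega := ⟨0, 1, 0, 0⟩

/-- The element `x + y√2`, where `√2 = ω - ω³`. -/
def ofSqrt2 (x y : ℤ) : ZOmega := ⟨x, y, 0, -y⟩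

lemma ofSqrt2_mul (a b c d : ℤ) :
    ofSqrt2 a b * ofSqrt2 c d = ofSqrt2 (a * c + 2 * b * d) (a * d + b * c) := by
  ext <;> simp only [ofSqrt2, mul_def] <;> ring

lemma ofSqrt2_zero : ofSqrt2 0 0 = 0 := by ext <;> simp [ofSqrt2]

lemma ofSqrt2_inj {a b c d : ℤ} : ofSqrt2 a b = ofSqrt2 c d ↔ a = c ∧ b = d := by
  simp [ofSqrt2, ZOmega.ext_iff]

def lift {R : Type*} [CommRing R] (x : R) (hx : x ^ 4 = -1) : ZOmega →+* R where
  toFun a := a.x0 + a.x1 * x + a.x2 * x ^ 2 + a.x3 * x ^ 3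
  map_one' := by simp
  map_zero' := by simp
  map_add' a b := by simp only [add_def]; push_cast; ring
  map_mul' a b := by
    simp only [mul_def]
    push_cast
    linear_combination (-((a.x1 : R) * b.x3 + a.x2 * b.x2 + a.x3 * b.x1)
      - ((a.x2 : R) * b.x3 + a.x3 * b.x2) * x - (a.x3 : R) * b.x3 * x ^ 2) * hx

section lift

variable {R : Type*} [CommRing R] {x : R} (hx : x ^ 4 = -1)

lemma lift_ω : lift x hx ω = x := by simp [lift, ω]

lemma lift_ofSqrt2 (a b : ℤ) : lift x hx (ofSqrt2 a b) = a + b * (x - x ^ 3) := by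
  simp only [lift, ofSqrt2, RingHom.coe_mk, MonoidHom.coe_mk, OneHom.coe_mk]; push_cast; ring

end lift

/-- `σ₃`, `σ₅`, `σ₇` are the automorphisms `ω ↦ ω³, ω⁵, ω⁷`; `σ₇` is complex conjugation. -/
def σ₃ : ZOmega ≃+* ZOmega where
  toFun a := ⟨a.x0, a.x3, -a.x2, a.x1⟩
  invFun a := ⟨a.x0, a.x3, -a.x2, a.x1⟩
  left_inv a := by ext <;> simp
  right_inv a := by ext <;> simp
  map_mul' a b := by ext <;> simp <;> ring
  map_add' a b := by ext <;> simp [add_comm]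

def σ₅ : ZOmega ≃+* ZOmega where
  toFun a := ⟨a.x0, -a.x1, a.x2, -a.x3⟩
  invFun a := ⟨a.x0, -a.x1, a.x2, -a.x3⟩
  left_inv a := by ext <;> simp
  right_inv a := by ext <;> simp
  map_mul' a b := by ext <;> simp <;> ring
  map_add' a b := by ext <;> simp [add_comm]

def σ₇ : ZOmega ≃+* ZOmega where
  toFun a := ⟨a.x0, -a.x3, -a.x2, -a.x1⟩
  invFun a := ⟨a.x0, -a.x3, -a.x2, -a.x1⟩
  left_inv a := by ext <;> simp
  right_inv a := by ext <;> simp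
  map_mul' a b := by ext <;> simp <;> ring
  map_add' a b := by ext <;> simp [add_comm]

@[simp] lemma σ₃_apply (a : ZOmega) : σ₃ a = ⟨a.x0, a.x3, -a.x2, a.x1⟩ := rfl
@[simp] lemma σ₅_apply (a : ZOmega) : σ₅ a = ⟨a.x0, -a.x1, a.x2, -a.x3⟩ := rfl
@[simp] lemma σ₇_apply (a : ZOmega) : σ₇ a = ⟨a.x0, -a.x3, -a.x2, -a.x1⟩ := rfl

lemma σ₇_ofSqrt2 (x y : ℤ) : σ₇ (ofSqrt2 x y) = ofSqrt2 x y := by ext <;> simp [ofSqrt2]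

lemma eq_ofSqrt2_of_σ₇_eq {a : ZOmega} (h : σ₇ a = a) : a = ofSqrt2 a.x0 a.x1 := by
  simp only [σ₇_apply, ZOmega.ext_iff] at h
  ext <;> simp only [ofSqrt2] <;> omega

def relNorm₀ (a : ZOmega) : ℤ := a.x0 ^ 2 + a.x1 ^ 2 + a.x2 ^ 2 + a.x3 ^ 2
def relNorm₁ (a : ZOmega) : ℤ := a.x0 * a.x1 + a.x1 * a.x2 + a.x2 * a.x3 - a.x0 * a.x3

lemma σ₇_mul_self (a : ZOmega) : σ₇ a * a = ofSqrt2 (relNorm₀ a) (relNorm₁ a) := by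
  ext <;> simp only [ofSqrt2, relNorm₀, relNorm₁, mul_def, σ₇_apply] <;> ring

def norm (a : ZOmega) : ℤ := relNorm₀ a ^ 2 - 2 * relNorm₁ a ^ 2

lemma mul_conj_eq_norm (a : ZOmega) : a * σ₃ a * σ₅ a * σ₇ a = (norm a : ZOmega) := by
  rw [intCast_def]
  ext <;> simp only [norm, relNorm₀, relNorm₁, mul_def, σ₃_apply, σ₅_apply, σ₇_apply] <;> ring

lemma dvd_norm (a : ZOmega) : a ∣ (norm a : ZOmega) :=
  ⟨σ₃ a * σ₅ a * σ₇ a, by rw [← mul_conj_eq_norm]; ring⟩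

lemma norm_mul (a b : ZOmega) : norm (a * b) = norm a * norm b := by
  simp only [norm, relNorm₀, relNorm₁, mul_def]; ring

lemma norm_intCast (n : ℤ) : norm (n : ZOmega) = n ^ 4 := by
  simp only [norm, relNorm₀, relNorm₁, intCast_def]; ring

lemma totallyNonneg_relNorm (a : ZOmega) : TotallyNonneg (relNorm₀ a) (relNorm₁ a) := by
  intro s hs
  have key : ((relNorm₀ a : ℤ) : ℝ) + (relNorm₁ a : ℤ) * s
      = (a.x0 + (a.x1 - a.x3) * s / 2) ^ 2 + (a.x2 + (a.x1 + a.x3) * s / 2) ^ 2 := by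
    simp only [relNorm₀, relNorm₁]; push_cast
    linear_combination (-((a.x1 : ℝ) ^ 2 + a.x3 ^ 2) / 2) * hs
  rw [key]; positivity

lemma norm_nonneg (a : ZOmega) : 0 ≤ norm a :=
  (totallyNonneg_relNorm a).sq_sub_two_mul_sq_nonneg

lemma eq_zero_of_norm_eq_zero {a : ZOmega} (h : norm a = 0) : a = 0 := by
  obtain ⟨h₀, -⟩ : relNorm₀ a = 0 ∧ relNorm₁ a = 0 :=
    Zsqrtd.divides_sq_eq_zero_z (d := 2) (by simp only [norm] at h; push_cast; linarith)
  simp only [relNorm₀] at h₀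
  ext <;> simp only [zero_def] <;>
    nlinarith [sq_nonneg a.x0, sq_nonneg a.x1, sq_nonneg a.x2, sq_nonneg a.x3]

lemma norm_pos {a : ZOmega} (h : a ≠ 0) : 0 < norm a :=
  (norm_nonneg a).lt_of_ne' (mt eq_zero_of_norm_eq_zero h)

lemma isUnit_of_norm_eq_one {a : ZOmega} (h : norm a = 1) : IsUnit a :=
  .of_mul_eq_one (σ₃ a * σ₅ a * σ₇ a) <| by
    rw [← mul_assoc, ← mul_assoc, mul_conj_eq_norm, h, Int.cast_one]

lemma natCast_dvd_natCast {m n : ℕ} : (m : ZOmega) ∣ n ↔ m ∣ n := by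
  refine ⟨fun ⟨c, hc⟩ => Int.natCast_dvd_natCast.mp ⟨c.x0, ?_⟩, Nat.cast_dvd_cast⟩
  simpa [natCast_def] using congrArg ZOmega.x0 hc

/-- Nearest-integer division. -/
def roundDiv (c d : ℤ) : ℤ := (2 * c + d) / (2 * d)

lemma abs_two_mul_sub_mul_roundDiv_le (c : ℤ) {d : ℤ} (hd : 0 < d) :
    |2 * (c - d * roundDiv c d)| ≤ d := by
  have h := Int.mul_ediv_add_emod (2 * c + d) (2 * d)
  have h₀ := Int.emod_nonneg (2 * c + d) (by positivity : 2 * d ≠ 0)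
  have h₁ := Int.emod_lt_of_pos (2 * c + d) (by positivity : 0 < 2 * d)
  rw [abs_le, roundDiv]
  constructor <;> linarith

lemma norm_lt_of_abs_two_mul_le {d : ℤ} (hd : 0 < d) {v : ZOmega} (h₀ : |2 * v.x0| ≤ d)
    (h₁ : |2 * v.x1| ≤ d) (h₂ : |2 * v.x2| ≤ d) (h₃ : |2 * v.x3| ≤ d) : norm v < d ^ 4 := by
  have sq_le {w : ℤ} (hw : |w| ≤ d) : w ^ 2 ≤ d ^ 2 := sq_le_sq' (abs_le.mp hw).1 (abs_le.mp hw).2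
  have e₀ := sq_le h₀; have e₁ := sq_le h₁; have e₂ := sq_le h₂; have e₃ := sq_le h₃
  by_contra! hge
  have hS : relNorm₀ v ≤ d ^ 2 := by unfold relNorm₀; nlinarith
  have hS₀ : 0 ≤ relNorm₀ v := by unfold relNorm₀; positivity
  have hR : relNorm₁ v = 0 := by
    unfold norm at hge; nlinarith [mul_le_mul hS hS hS₀ (by positivity), sq_nonneg (relNorm₁ v)]
  have hSd : relNorm₀ v = d ^ 2 := by
    unfold norm at hge; rw [hR] at hge; nlinarith [mul_le_mul hS hS hS₀ (by positivity)]
  -- all four coordinates are `±d/2`, and then `relNorm₁ v ≠ 0`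
  unfold relNorm₀ at hSd
  have f₀ : (2 * v.x0) ^ 2 = d ^ 2 := by linarith
  have f₁ : (2 * v.x1) ^ 2 = d ^ 2 := by linarith
  have f₃ : (2 * v.x3) ^ 2 = d ^ 2 := by linarith
  have hR' : 4 * relNorm₁ v
      = 2 * v.x1 * (2 * v.x0 + 2 * v.x2) + 2 * v.x3 * (2 * v.x2 - 2 * v.x0) := by
    unfold relNorm₁; ring
  have hne {w : ℤ} (hw : (2 * w) ^ 2 = d ^ 2) : w ≠ 0 := by rintro rfl; nlinarith
  rcases sq_eq_sq_iff_eq_or_eq_neg.mp (e₂.antisymm (by linarith) |>.trans f₀.symm) with h | h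
  · exact mul_ne_zero (hne f₁) (hne f₀) (by rw [hR, h] at hR'; linarith)
  · exact mul_ne_zero (hne f₃) (hne f₀) (by rw [hR, h] at hR'; linarith)

/-- Round the coordinates of `a / b = a * σ₃ b * σ₅ b * σ₇ b / norm b` to the nearest integers. -/
def quot (a b : ZOmega) : ZOmega :=
  let c := a * (σ₃ b * σ₅ b * σ₇ b)
  ⟨roundDiv c.x0 (norm b), roundDiv c.x1 (norm b), roundDiv c.x2 (norm b), roundDiv c.x3 (norm b)⟩

lemma norm_sub_mul_quot_lt (a : ZOmega) {b : ZOmega} (hb : b ≠ 0) :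
    norm (a - b * quot a b) < norm b := by
  set d := norm b
  have hd : 0 < d := norm_pos hb
  set c := a * (σ₃ b * σ₅ b * σ₇ b)
  set v := c - d * quot a b
  have hv : norm v < d ^ 4 := by
    have hcoord : v = ⟨c.x0 - d * roundDiv c.x0 d, c.x1 - d * roundDiv c.x1 d,
        c.x2 - d * roundDiv c.x2 d, c.x3 - d * roundDiv c.x3 d⟩ := by
      ext <;> simp only [v, sub_def, mul_def, intCast_def, zero_mul, sub_zero, add_zero] <;> rfl
    rw [hcoord]
    exact norm_lt_of_abs_two_mul_le hd (abs_two_mul_sub_mul_roundDiv_le _ hd)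
      (abs_two_mul_sub_mul_roundDiv_le _ hd) (abs_two_mul_sub_mul_roundDiv_le _ hd)
      (abs_two_mul_sub_mul_roundDiv_le _ hd)
  have hbv : b * v = d * (a - b * quot a b) := by
    simp only [v, c, d, ← mul_conj_eq_norm]; ring
  have hnorm : d * norm v = d ^ 4 * norm (a - b * quot a b) := by
    have h := congrArg norm hbv
    rwa [norm_mul, norm_mul, norm_intCast] at h
  refine lt_of_mul_lt_mul_left ?_ (by positivity : 0 ≤ d ^ 4)
  rw [← hnorm]
  nlinarith

instance : EuclideanDomain ZOmega where
  quotient := quot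
  quotient_zero a := by ext <;> simp [quot, roundDiv, norm, relNorm₀, relNorm₁]
  remainder a b := a - b * quot a b
  quotient_mul_add_remainder_eq a b := by ring
  r a b := (norm a).toNat < (norm b).toNat
  r_wellFounded := (measure fun a => (norm a).toNat).wf
  remainder_lt a _ hb := (Int.toNat_lt_toNat (norm_pos hb)).mpr (norm_sub_mul_quot_lt a hb)
  mul_left_not_lt a b hb := not_lt.mpr <| Int.toNat_le_toNat <| by
    rw [norm_mul]; nlinarith [norm_nonneg a, norm_pos hb]

lemma exists_lift_ofSqrt2_eq_zero {R : Type*} [CommRing R] [IsDomain R] {x : R}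
    (hx : x ^ 4 = -1) {b₀ b₁ : ℤ} (hb : ((b₀ ^ 2 - 2 * b₁ ^ 2 : ℤ) : R) = 0) :
    ∃ (y : R) (hy : y ^ 4 = -1), lift y hy (ofSqrt2 b₀ b₁) = 0 := by
  have hx' : (-x) ^ 4 = -1 := by rw [neg_pow, hx]; norm_num
  -- `x - x³` is a square root of `2`, and `-x` is the root giving the other sign
  have key : lift x hx (ofSqrt2 b₀ b₁) * lift (-x) hx' (ofSqrt2 b₀ b₁) = 0 := by
    rw [lift_ofSqrt2, lift_ofSqrt2, ← hb]; push_cast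
    linear_combination (-(b₁ : R) ^ 2 * (x ^ 2 - 2)) * hx
  rcases mul_eq_zero.mp key with h | h
  · exact ⟨x, hx, h⟩
  · exact ⟨-x, hx', h⟩

theorem exists_prime_dvd_iff_lift_eq_zero {p : ℕ} [Fact p.Prime] {x : ZMod p}
    (hx : x ^ 4 = -1) : ∃ π : ZOmega, Prime π ∧ ∀ a, π ∣ a ↔ lift x hx a = 0 := by
  have := RingHom.ker_isPrime (lift x hx)
  have hker : RingHom.ker (lift x hx) ≠ ⊥ := fun h => by
    have hp : (p : ZOmega) ∈ RingHom.ker (lift x hx) := by simp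
    rw [h, Ideal.mem_bot] at hp
    exact (Fact.out : p.Prime).ne_zero (by simpa [natCast_def, ZOmega.ext_iff] using hp)
  refine ⟨_, Submodule.IsPrincipal.prime_generator_of_isPrime _ hker, fun a => ?_⟩
  rw [← Submodule.IsPrincipal.mem_iff_generator_dvd, RingHom.mem_ker]

/-- `f ω - g ω` lies in the ideal generated by `f l` and `g l`, and its norm, a power of `2`, is
prime to `p`. -/
theorem isCoprime_map_of_dvd {p : ℕ} (hp : Odd p) {l : ZOmega} {z : ℤ}
    (hlp : l ∣ (p : ZOmega)) (hlz : l ∣ ω - z) (f g : ZOmega ≃+* ZOmega) {k : ℕ}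
    (hk : norm (f ω - g ω) = 2 ^ k) : IsCoprime (f l) (g l) := by
  obtain ⟨u, hu⟩ := map_dvd f hlz
  rw [map_sub, map_intCast] at hu
  have hp2 : IsCoprime ((p : ℤ) : ZOmega) ((norm (f ω - g ω) : ℤ) : ZOmega) := by
    have h2k : IsCoprime (p : ℤ) (2 ^ k) := by
      exact_mod_cast Nat.isCoprime_iff_coprime.mpr ((Nat.coprime_two_right.mpr hp).pow_right k)
    exact hk ▸ h2k.intCast
  rw [Int.cast_natCast] at hp2
  have h : IsCoprime (f l) (f ω - g ω) :=
    (hp2.of_isCoprime_of_dvd_left (by simpa using map_dvd f hlp)).of_isCoprime_of_dvd_right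
      (dvd_norm _)
  rw [show f ω - g ω = -(g ω - z) + f l * u by rw [← hu]; ring,
    IsCoprime.add_mul_left_right_iff, IsCoprime.neg_right_iff] at h
  exact h.of_isCoprime_of_dvd_right (by simpa only [map_sub, map_intCast] using map_dvd g hlz)

theorem norm_eq_of_dvd {p : ℕ} (hp : p.Prime) (hodd : Odd p) {l : ZOmega} {z : ℤ}
    (hl : ¬IsUnit l) (hlp : l ∣ (p : ZOmega)) (hlz : l ∣ ω - z) : norm l = p := by
  have h₃ := isCoprime_map_of_dvd hodd hlp hlz (.refl _) σ₃ (k := 2) (by decide)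
  have h₅ := isCoprime_map_of_dvd hodd hlp hlz (.refl _) σ₅ (k := 4) (by decide)
  have h₇ := isCoprime_map_of_dvd hodd hlp hlz (.refl _) σ₇ (k := 2) (by decide)
  have h₃₅ := isCoprime_map_of_dvd hodd hlp hlz σ₃ σ₅ (k := 2) (by decide)
  have h₃₇ := isCoprime_map_of_dvd hodd hlp hlz σ₃ σ₇ (k := 4) (by decide)
  have h₅₇ := isCoprime_map_of_dvd hodd hlp hlz σ₅ σ₇ (k := 2) (by decide)
  have hσ (f : ZOmega ≃+* ZOmega) : f l ∣ (p : ZOmega) := by simpa using map_dvd f hlp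
  have hdvd : (norm l : ZOmega) ∣ (p : ZOmega) := by
    rw [← mul_conj_eq_norm]
    exact ((h₇.mul_left h₃₇).mul_left h₅₇).mul_dvd
      (((h₅.mul_left h₃₅).mul_dvd (h₃.mul_dvd hlp (hσ σ₃)) (hσ σ₅))) (hσ σ₇)
  lift norm l to ℕ using norm_nonneg l with k hk
  rw [Int.cast_natCast, natCast_dvd_natCast] at hdvd
  rcases hp.eq_one_or_self_of_dvd k hdvd with rfl | rfl
  · exact absurd (isUnit_of_norm_eq_one hk.symm) hl
  · rfl

theorem exists_σ₇_mul_self_eq_of_dvd {p : ℤ} (hp : p ≠ 0) {π : ZOmega} (hπ : norm π = p)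
    (hcop : IsCoprime π (σ₇ π)) {b₀ b₁ : ℤ} (hn : b₀ ^ 2 - 2 * b₁ ^ 2 = p)
    (hβ : TotallyNonneg b₀ b₁) (hdvd : π ∣ ofSqrt2 b₀ b₁) :
    ∃ α : ZOmega, σ₇ α * α = ofSqrt2 b₀ b₁ := by
  have hσdvd : σ₇ π ∣ ofSqrt2 b₀ b₁ := σ₇_ofSqrt2 b₀ b₁ ▸ map_dvd σ₇ hdvd
  obtain ⟨t, ht⟩ := hcop.symm.mul_dvd hσdvd hdvd
  have hγ := σ₇_mul_self π
  have hc := totallyNonneg_relNorm π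
  have hcp : relNorm₀ π ^ 2 - 2 * relNorm₁ π ^ 2 = p := hπ
  generalize relNorm₀ π = c₀, relNorm₁ π = c₁ at hγ hc hcp
  rw [hγ] at ht
  have hγ0 : ofSqrt2 c₀ c₁ ≠ 0 := fun h => hp <| by
    rw [← ofSqrt2_zero, ofSqrt2_inj] at h
    rw [← hcp, h.1, h.2]; ring
  -- the quotient `t` is fixed by `σ₇`, so it lies in `ℤ[√2]`
  have htσ : σ₇ t = t := mul_left_cancel₀ hγ0 <| calc
    ofSqrt2 c₀ c₁ * σ₇ t = σ₇ (ofSqrt2 c₀ c₁ * t) := by rw [map_mul, σ₇_ofSqrt2]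
    _ = ofSqrt2 c₀ c₁ * t := by rw [← ht, σ₇_ofSqrt2]
  have htx := eq_ofSqrt2_of_σ₇_eq htσ
  generalize t.x0 = e₀, t.x1 = e₁ at htx
  subst htx
  have hb := ht
  rw [ofSqrt2_mul, ofSqrt2_inj] at hb
  obtain ⟨rfl, rfl⟩ := hb
  have he : e₀ ^ 2 - 2 * e₁ ^ 2 = 1 :=
    mul_left_cancel₀ hp (by linear_combination hn - (e₀ ^ 2 - 2 * e₁ ^ 2) * hcp)
  obtain ⟨x₀, x₁, rfl, rfl⟩ := (hβ.of_mul hc (hcp ▸ hp)).exists_eq_sq he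
  refine ⟨π * ofSqrt2 x₀ x₁, ?_⟩
  rw [ht, map_mul, σ₇_ofSqrt2, mul_mul_mul_comm, hγ, ofSqrt2_mul x₀]
  congr 2 <;> ring

theorem exists_σ₇_mul_self_eq {p : ℕ} (hp : p.Prime) (h8 : p % 8 = 1) {b₀ b₁ : ℤ}
    (hn : b₀ ^ 2 - 2 * b₁ ^ 2 = p) (hβ : TotallyNonneg b₀ b₁) :
    ∃ α : ZOmega, σ₇ α * α = ofSqrt2 b₀ b₁ := by
  have := Fact.mk hp
  have hodd : Odd p := hp.odd_of_ne_two (by omega)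
  obtain ⟨x, hx⟩ := ZMod.exists_pow_four_eq_neg_one h8
  obtain ⟨y, hy, hyβ⟩ := exists_lift_ofSqrt2_eq_zero hx (b₀ := b₀) (b₁ := b₁) (by simp [hn])
  obtain ⟨π, hπ, hdvd⟩ := exists_prime_dvd_iff_lift_eq_zero hy
  have hπp : π ∣ (p : ZOmega) := (hdvd _).mpr (by simp)
  have hπω : π ∣ ω - ((y.val : ℕ) : ℤ) := (hdvd _).mpr <| by
    rw [map_sub, map_intCast, lift_ω, Int.cast_natCast, ZMod.natCast_zmod_val, sub_self]
  exact exists_σ₇_mul_self_eq_of_dvd (by exact_mod_cast hp.ne_zero)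
    (norm_eq_of_dvd hp hodd hπ.not_isUnit hπp hπω)
    (isCoprime_map_of_dvd hodd hπp hπω (.refl _) σ₇ (k := 2) (by decide)) hn hβ
    ((hdvd _).mpr hyβ)

end ZOmega

lemma omegaC_sq : omegaC ^ 2 = Complex.I := by
  have hs : ((√2 : ℝ) : ℂ) ^ 2 = 2 := by
    rw [← Complex.ofReal_pow, Real.sq_sqrt zero_le_two]; norm_num
  rw [omegaC, div_pow, hs, add_sq, Complex.I_sq]; ring

lemma omegaC_pow_four : omegaC ^ 4 = -1 := by
  rw [show 4 = 2 * 2 by rfl, pow_mul, omegaC_sq, Complex.I_sq]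

lemma conj_omegaC : starRingEnd ℂ omegaC = -omegaC ^ 3 := by
  rw [pow_succ, omegaC_sq, omegaC, map_div₀, map_add, map_one, Complex.conj_I,
    Complex.conj_ofReal]
  ring_nf; rw [Complex.I_sq]; ring

lemma omegaC_sub_pow_three : omegaC - omegaC ^ 3 = ((√2 : ℝ) : ℂ) := by
  have hs : ((√2 : ℝ) : ℂ) ^ 2 = 2 := by
    rw [← Complex.ofReal_pow, Real.sq_sqrt zero_le_two]; norm_num
  have h0 : ((√2 : ℝ) : ℂ) ≠ 0 := by exact_mod_cast (Real.sqrt_pos.mpr two_pos).ne'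
  rw [pow_succ, omegaC_sq, omegaC]
  field_simp
  linear_combination -hs - Complex.I_sq

namespace ZOmega

noncomputable def toComplex : ZOmega →+* ℂ := lift omegaC omegaC_pow_four

lemma toComplex_σ₇ (a : ZOmega) : toComplex (σ₇ a) = starRingEnd ℂ (toComplex a) := by
  simp only [toComplex, lift, RingHom.coe_mk, MonoidHom.coe_mk, OneHom.coe_mk, σ₇_apply,
    map_add, map_mul, map_pow, map_intCast, conj_omegaC]
  push_cast
  linear_combination (a.x3 * omegaC * (omegaC ^ 4 - 1) - a.x2 * omegaC ^ 2) * omegaC_pow_four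

lemma toComplex_ofSqrt2 (x y : ℤ) : toComplex (ofSqrt2 x y) = ((x + y * √2 : ℝ) : ℂ) := by
  rw [toComplex, lift_ofSqrt2, omegaC_sub_pow_three]; push_cast; ring

end ZOmega

/-- If β = b₀ + b₁√2 ∈ Z[√2] satisfies β ≥ 0, β• ≥ 0, and n = β•β is a prime
    congruent to 1 mod 8, then the relative norm equation α†α = β has a solution
    α ∈ Z[ω]. -/
theorem stmt5 (b₀ b₁ : ℤ)
    (hβ : 0 ≤ (b₀ : ℝ) + (b₁ : ℝ) * Real.sqrt 2)
    (hβb : 0 ≤ (b₀ : ℝ) - (b₁ : ℝ) * Real.sqrt 2)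
    (n : ℤ) (hn : n = b₀ ^ 2 - 2 * b₁ ^ 2) (hp : Prime n) (hmod : n % 8 = 1) :
    ∃ a₀ a₁ a₂ a₃ : ℤ,
      (starRingEnd ℂ) ((a₀ : ℂ) + (a₁ : ℂ) * omegaC + (a₂ : ℂ) * omegaC ^ 2
            + (a₃ : ℂ) * omegaC ^ 3)
        * ((a₀ : ℂ) + (a₁ : ℂ) * omegaC + (a₂ : ℂ) * omegaC ^ 2 + (a₃ : ℂ) * omegaC ^ 3)
        = (((b₀ : ℝ) + (b₁ : ℝ) * Real.sqrt 2 : ℝ) : ℂ) := by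
  have hβ' := totallyNonneg_of_sqrt_two hβ hβb
  lift n to ℕ using hn ▸ hβ'.sq_sub_two_mul_sq_nonneg
  obtain ⟨α, hα⟩ := ZOmega.exists_σ₇_mul_self_eq (Int.prime_iff_natAbs_prime.mp hp) (by omega)
    hn.symm hβ'
  refine ⟨α.x0, α.x1, α.x2, α.x3, ?_⟩
  have := congrArg ZOmega.toComplex hα
  rwa [map_mul, ZOmega.toComplex_σ₇, ZOmega.toComplex_ofSqrt2] at this
end

section
/- For every ellipse E ⊆ ℝ² centered at the origin defined by a positive definite symmetric 2×2 matrix of determinant 1, there exists an integer matrix G of determinant ±1 such that the image G(E) is (1/2)-upright, i.e., area(G(E))/area(BBox(G(E))) ≥ 1/2. -/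
open Matrix MeasureTheory

/-!
The ellipse `E = {u | uᵀ D u ≤ 1}` has area `π / √(det D)`, and its image under `G` is `|det G|`
times as large. Projecting `G(E)` to the `i`-th axis gives `[-√mᵢᵢ, √mᵢᵢ]` with `m = G D⁻¹ Gᵀ`
(Cauchy–Schwarz for the form `D`), so for `det D = 1` and `G ∈ SL(2, ℤ)` the uprightness of `G(E)`
is `π / (4 √(m₀₀ m₁₁))`. The form `D⁻¹` is `x ↦ √(det D⁻¹) |x₀ τ + x₁|² / im τ` for a point `τ` of
the upper half plane, and `G ∈ SL(2, ℤ)` moving `τ` into the standard fundamental domain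
`|w| ≥ 1, |re w| ≤ 1/2` makes `m₀₀ m₁₁ = det D⁻¹ · |w|² / (im w)² ≤ 4/3`. Hence the uprightness is at
least `π / (4 √(4/3)) > 1/2`.
-/

section Ellipsoid

variable {m n : Type*} [Fintype n]

def ellipsoid (D : Matrix n n ℝ) : Set (n → ℝ) := {u | u ⬝ᵥ (D *ᵥ u) ≤ 1}

def boundingBox (S : Set (m → ℝ)) : Set (m → ℝ) := {v | ∀ i, v i ∈ (· i) '' S}

noncomputable def uprightness [Fintype m] (S : Set (m → ℝ)) : ℝ :=
  (volume S).toReal / (volume (boundingBox S)).toReal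

lemma sq_dotProduct_le (u v : n → ℝ) : (u ⬝ᵥ v) ^ 2 ≤ (u ⬝ᵥ u) * (v ⬝ᵥ v) := by
  simpa only [dotProduct, sq] using Finset.sum_mul_sq_le_sq_mul_sq Finset.univ u v

lemma mul_mul_transpose_apply_self (G : Matrix m n ℝ) (N : Matrix n n ℝ) (i : m) :
    (G * N * Gᵀ) i i = G i ⬝ᵥ N *ᵥ G i := by
  rw [mul_apply, dotProduct_mulVec, dotProduct]
  simp [vecMul, mul_apply, dotProduct, mul_comm]

variable [DecidableEq n]

lemma ellipsoid_transpose_mul_self (B : Matrix n n ℝ) :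
    ellipsoid (Bᵀ * B) = (B *ᵥ ·) ⁻¹' ellipsoid 1 := by
  ext u
  simp only [ellipsoid, Set.mem_ofPred_eq, Set.mem_preimage, one_mulVec, ← mulVec_mulVec,
    dotProduct_mulVec _ Bᵀ, vecMul_transpose]

lemma Matrix.PosDef.exists_eq_transpose_mul_self {D : Matrix n n ℝ} (hD : D.PosDef) :
    ∃ B : Matrix n n ℝ, D = Bᵀ * B := by
  open scoped MatrixOrder in
  obtain ⟨B, hB⟩ := CStarAlgebra.nonneg_iff_eq_star_mul_self.mp hD.posSemidef.nonneg
  exact ⟨B, by simpa [star_eq_conjTranspose] using hB⟩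

lemma volume_ellipsoid {D : Matrix n n ℝ} (hD : D.PosDef) :
    volume (ellipsoid D) = ENNReal.ofReal (√D.det)⁻¹ * volume (ellipsoid (1 : Matrix n n ℝ)) := by
  obtain ⟨B, rfl⟩ := hD.exists_eq_transpose_mul_self
  have hdet : (Bᵀ * B).det = B.det ^ 2 := by rw [det_mul, det_transpose, sq]
  have hB : (toLin' B).det ≠ 0 := by
    rw [LinearMap.det_toLin']
    exact fun h => hD.det_pos.ne' (by rw [hdet, h, sq, zero_mul])
  rw [ellipsoid_transpose_mul_self]
  change volume (toLin' B ⁻¹' _) = _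
  rw [Measure.addHaar_preimage_linearMap _ hB,
    LinearMap.det_toLin', hdet, Real.sqrt_sq_eq_abs, abs_inv]

lemma image_dotProduct_ellipsoid_one (v : n → ℝ) :
    (v ⬝ᵥ ·) '' ellipsoid 1 = Set.Icc (-√(v ⬝ᵥ v)) √(v ⬝ᵥ v) := by
  have hv : 0 ≤ v ⬝ᵥ v := dotProduct_self_star_nonneg v
  ext t
  simp only [ellipsoid, one_mulVec, Set.mem_image, Set.mem_ofPred_eq, Set.mem_Icc, ← abs_le,
    Real.le_sqrt (abs_nonneg t) hv, sq_abs]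
  constructor
  · rintro ⟨u, hu, rfl⟩
    calc (v ⬝ᵥ u) ^ 2 ≤ (v ⬝ᵥ v) * (u ⬝ᵥ u) := sq_dotProduct_le v u
      _ ≤ v ⬝ᵥ v := mul_le_of_le_one_right hv hu
  · intro ht
    rcases hv.eq_or_lt with hv0 | hvpos
    · exact ⟨0, by simp, by rw [dotProduct_zero]; nlinarith⟩
    refine ⟨(t / (v ⬝ᵥ v)) • v, ?_, ?_⟩
    · calc (t / (v ⬝ᵥ v)) • v ⬝ᵥ (t / (v ⬝ᵥ v)) • v = t ^ 2 / (v ⬝ᵥ v) := by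
            rw [smul_dotProduct, dotProduct_smul, smul_eq_mul, smul_eq_mul]
            field_simp
        _ ≤ 1 := (div_le_one hvpos).2 ht
    · rw [dotProduct_smul, smul_eq_mul, div_mul_cancel₀ _ hvpos.ne']

lemma image_dotProduct_ellipsoid {D : Matrix n n ℝ} (hD : D.PosDef) (w : n → ℝ) :
    (w ⬝ᵥ ·) '' ellipsoid D = Set.Icc (-√(w ⬝ᵥ D⁻¹ *ᵥ w)) √(w ⬝ᵥ D⁻¹ *ᵥ w) := by
  obtain ⟨B, rfl⟩ := hD.exists_eq_transpose_mul_self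
  have hB : IsUnit B.det := by
    refine isUnit_iff_ne_zero.2 fun h => hD.det_pos.ne' ?_
    rw [det_mul, det_transpose, h, zero_mul]
  have hpre : (B *ᵥ ·) ⁻¹' ellipsoid 1 = (B⁻¹ *ᵥ ·) '' ellipsoid 1 :=
    congrFun (Set.image_eq_preimage_of_inverse
      (fun x => show B *ᵥ B⁻¹ *ᵥ x = x by rw [mulVec_mulVec, mul_nonsing_inv _ hB, one_mulVec])
      (fun x => show B⁻¹ *ᵥ B *ᵥ x = x by
        rw [mulVec_mulVec, nonsing_inv_mul _ hB, one_mulVec])).symm _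
  rw [ellipsoid_transpose_mul_self, hpre, Set.image_image]
  simp_rw [dotProduct_mulVec w B⁻¹]
  rw [image_dotProduct_ellipsoid_one, Matrix.mul_inv_rev, ← transpose_nonsing_inv, ← mulVec_mulVec,
    mulVec_transpose, ← dotProduct_mulVec]

lemma volume_image_mulVec_ellipsoid {D : Matrix n n ℝ} (hD : D.PosDef) (G : Matrix n n ℝ) :
    volume ((G *ᵥ ·) '' ellipsoid D)
      = ENNReal.ofReal (|G.det| / √D.det) * volume (ellipsoid (1 : Matrix n n ℝ)) := by
  change volume (toLin' G '' _) = _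
  rw [Measure.addHaar_image_linearMap, LinearMap.det_toLin', volume_ellipsoid hD,
    ← mul_assoc, ← ENNReal.ofReal_mul (abs_nonneg _), div_eq_mul_inv]

lemma volume_boundingBox_image_mulVec_ellipsoid [Fintype m] {D : Matrix n n ℝ} (hD : D.PosDef)
    (G : Matrix m n ℝ) :
    volume (boundingBox ((G *ᵥ ·) '' ellipsoid D))
      = ∏ i, ENNReal.ofReal (2 * √((G * D⁻¹ * Gᵀ) i i)) := by
  have hbox : boundingBox ((G *ᵥ ·) '' ellipsoid D)
      = Set.univ.pi fun i => Set.Icc (-√((G * D⁻¹ * Gᵀ) i i)) √((G * D⁻¹ * Gᵀ) i i) := by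
    ext v
    simp only [boundingBox, Set.image_image, Set.mem_univ_pi, mul_mul_transpose_apply_self]
    exact forall_congr' fun i => by rw [← image_dotProduct_ellipsoid hD]; rfl
  rw [hbox, volume_pi_pi]
  simp_rw [Real.volume_Icc, sub_neg_eq_add, two_mul]

lemma uprightness_image_mulVec_ellipsoid {D : Matrix n n ℝ} (hD : D.PosDef) (G : Matrix n n ℝ) :
    uprightness ((G *ᵥ ·) '' ellipsoid D) = |G.det| / √D.det
      * (volume (ellipsoid (1 : Matrix n n ℝ))).toReal / ∏ i, 2 * √((G * D⁻¹ * Gᵀ) i i) := by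
  rw [uprightness, volume_image_mulVec_ellipsoid hD, volume_boundingBox_image_mulVec_ellipsoid hD,
    ENNReal.toReal_mul, ENNReal.toReal_ofReal (by positivity), ENNReal.toReal_prod]
  simp_rw [ENNReal.toReal_ofReal (by positivity : (0 : ℝ) ≤ 2 * √_)]

lemma ellipsoid_one_eq_preimage_closedBall :
    ellipsoid (1 : Matrix n n ℝ)
      = WithLp.toLp 2 ⁻¹' Metric.closedBall (0 : EuclideanSpace ℝ n) 1 := by
  ext u
  simp only [ellipsoid, one_mulVec, Set.mem_ofPred_eq, Set.mem_preimage, mem_closedBall_zero_iff]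
  rw [← sq_le_one_iff₀ (norm_nonneg _), EuclideanSpace.norm_sq_eq]
  simp [dotProduct, sq]

end Ellipsoid

lemma volume_ellipsoid_one_fin_two :
    volume (ellipsoid (1 : Matrix (Fin 2) (Fin 2) ℝ)) = ENNReal.ofReal Real.pi := by
  rw [ellipsoid_one_eq_preimage_closedBall, (PiLp.volume_preserving_toLp (Fin 2)).measure_preimage
    measurableSet_closedBall.nullMeasurableSet, EuclideanSpace.volume_closedBall_fin_two]
  simp

section Reduction

open UpperHalfPlane ModularGroup Complex
open scoped MatrixGroups

lemma normSq_le_four_thirds_mul_im_sq_of_mem_fd {w : ℍ} (hw : w ∈ fd) :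
    normSq (w : ℂ) ≤ 4 / 3 * w.im ^ 2 := by
  obtain ⟨hnorm, hre⟩ := hw
  rw [normSq_apply, coe_re, coe_im] at *
  nlinarith [abs_le.mp hre]

lemma dotProduct_mulVec_fin_two (N : Matrix (Fin 2) (Fin 2) ℝ) (hN : N.IsSymm) (v : Fin 2 → ℝ) :
    v ⬝ᵥ N *ᵥ v = N 0 0 * v 0 ^ 2 + 2 * N 0 1 * v 0 * v 1 + N 1 1 * v 1 ^ 2 := by
  simp only [dotProduct, mulVec, Fin.sum_univ_two, hN.apply 0 1]
  ring

lemma exists_sl2_diag_mul_diag_le (N : Matrix (Fin 2) (Fin 2) ℝ) (hN : N.PosDef) :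
    ∃ g : SL(2, ℤ), let G := (g : Matrix (Fin 2) (Fin 2) ℤ).map (Int.cast : ℤ → ℝ)
      (G * N * Gᵀ) 0 0 * (G * N * Gᵀ) 1 1 ≤ 4 / 3 * N.det := by
  have hsymm : N.IsSymm := hN.isHermitian
  have hc : 0 < N 1 1 := hN.diag_pos
  set s := √N.det
  have hs : 0 < s := Real.sqrt_pos.2 hN.det_pos
  have hs2 : s ^ 2 = N 0 0 * N 1 1 - N 0 1 ^ 2 := by
    rw [Real.sq_sqrt hN.det_pos.le, det_fin_two, hsymm.apply 0 1]; ring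
  have hτre : ((N 0 1 + s * Complex.I) / N 1 1 : ℂ).re = N 0 1 / N 1 1 := by simp
  have hτim : ((N 0 1 + s * Complex.I) / N 1 1 : ℂ).im = s / N 1 1 := by simp
  let τ : ℍ := ⟨(N 0 1 + s * Complex.I) / N 1 1, hτim ▸ div_pos hs hc⟩
  have hτ : (τ : ℂ) = (N 0 1 + s * Complex.I) / N 1 1 := rfl
  -- up to the factor `s / im τ`, `N` is the Gram matrix of the basis `(τ, 1)` of `ℤτ + ℤ`
  have hform : ∀ v : Fin 2 → ℝ, v ⬝ᵥ N *ᵥ v = s * normSq (v 0 * τ + v 1) / τ.im := by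
    intro v
    rw [dotProduct_mulVec_fin_two N hsymm, normSq_apply]
    simp only [add_re, add_im, re_ofReal_mul, im_ofReal_mul, ofReal_re, ofReal_im,
      UpperHalfPlane.im, hτ, hτre, hτim]
    field_simp
    linear_combination (-v 0 ^ 2) * hs2
  obtain ⟨g, hg⟩ := exists_smul_mem_fd τ
  refine ⟨g, ?_⟩
  intro G
  set w := g • τ
  set num : ℂ := g 0 0 * τ + g 0 1
  set den : ℂ := g 1 0 * τ + g 1 1
  have hw : (w : ℂ) = num / den := by
    rw [coe_specialLinearGroup_apply]; simp [num, den]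
  have hwim : w.im = τ.im / normSq den := by
    rw [ModularGroup.im_smul_eq_div_normSq]; simp [den, denom]
  have hden : normSq den ≠ 0 := fun h => w.im_pos.ne' (by rw [hwim, h, div_zero])
  have hM0 : (G * N * Gᵀ) 0 0 = s * normSq num / τ.im := by
    rw [mul_mul_transpose_apply_self, hform]; simp [G, num]
  have hM1 : (G * N * Gᵀ) 1 1 = s * normSq den / τ.im := by
    rw [mul_mul_transpose_apply_self, hform]; simp [G, den]
  calc (G * N * Gᵀ) 0 0 * (G * N * Gᵀ) 1 1 = s ^ 2 * (normSq (w : ℂ) / w.im ^ 2) := by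
        rw [hM0, hM1, hw, normSq_div, hwim]
        field_simp
    _ ≤ s ^ 2 * (4 / 3) := by
        gcongr s ^ 2 * ?_
        rw [div_le_iff₀ (pow_pos w.im_pos 2)]
        exact normSq_le_four_thirds_mul_im_sq_of_mem_fd hg
    _ = 4 / 3 * N.det := by rw [Real.sq_sqrt hN.det_pos.le]; ring

end Reduction

lemma one_half_le_pi_div_of_mul_le {a c : ℝ} (ha : 0 < a) (hc : 0 < c) (hac : a * c ≤ 4 / 3) :
    1 / 2 ≤ Real.pi / (2 * √a * (2 * √c)) := by
  rw [le_div_iff₀ (by positivity), mul_mul_mul_comm, ← Real.sqrt_mul ha.le]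
  have : √(a * c) ≤ 3 / 2 := Real.sqrt_le_iff.2 ⟨by norm_num, by linarith⟩
  linarith [Real.pi_gt_three]

theorem stmt8_general (D : Matrix (Fin 2) (Fin 2) ℝ) (hpd : D.PosDef)
    (hdet : D.det = 1) :
    ∃ G : Matrix (Fin 2) (Fin 2) ℤ, (G.det = 1 ∨ G.det = -1) ∧
      (volume ((fun u : Fin 2 → ℝ => (G.map (Int.cast : ℤ → ℝ)) *ᵥ u) ''
          {u : Fin 2 → ℝ | u ⬝ᵥ (D *ᵥ u) ≤ 1})).toReal /
      (volume {v : Fin 2 → ℝ | ∀ i : Fin 2, v i ∈ (fun u : Fin 2 → ℝ => u i) ''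
          ((fun u : Fin 2 → ℝ => (G.map (Int.cast : ℤ → ℝ)) *ᵥ u) ''
            {u : Fin 2 → ℝ | u ⬝ᵥ (D *ᵥ u) ≤ 1})}).toReal
        ≥ 1 / 2 := by
  obtain ⟨g, hg⟩ := exists_sl2_diag_mul_diag_le D⁻¹ hpd.inv
  refine ⟨g, Or.inl g.det_coe, ?_⟩
  set G := (g : Matrix (Fin 2) (Fin 2) ℤ).map (Int.cast : ℤ → ℝ)
  have hGdet : G.det = 1 := by simp [G, ← Int.cast_det]
  have hM : (G * D⁻¹ * Gᵀ).PosDef := hpd.inv.mul_mul_conjTranspose_same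
    (vecMul_injective_of_isUnit <| (isUnit_iff_isUnit_det G).2 (hGdet ▸ isUnit_one))
  change uprightness ((G *ᵥ ·) '' ellipsoid D) ≥ 1 / 2
  rw [uprightness_image_mulVec_ellipsoid hpd, volume_ellipsoid_one_fin_two, hGdet, hdet,
    Fin.prod_univ_two, ENNReal.toReal_ofReal Real.pi_pos.le, abs_one, Real.sqrt_one, div_one,
    one_mul]
  exact one_half_le_pi_div_of_mul_le hM.diag_pos hM.diag_pos
    (by simpa [det_nonsing_inv, hdet] using hg)

/-- Every ellipse centered at the origin defined by a symmetric positive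
    definite matrix of determinant 1 can be mapped by an integer matrix of
    determinant ±1 to a (1/2)-upright ellipse. -/
theorem stmt8 (D : Matrix (Fin 2) (Fin 2) ℝ) (hsymm : D.IsSymm) (hpd : D.PosDef)
    (hdet : D.det = 1) :
    ∃ G : Matrix (Fin 2) (Fin 2) ℤ, (G.det = 1 ∨ G.det = -1) ∧
      (volume ((fun u : Fin 2 → ℝ => (G.map (Int.cast : ℤ → ℝ)) *ᵥ u) ''
          {u : Fin 2 → ℝ | u ⬝ᵥ (D *ᵥ u) ≤ 1})).toReal /
      (volume {v : Fin 2 → ℝ | ∀ i : Fin 2, v i ∈ (fun u : Fin 2 → ℝ => u i) ''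
          ((fun u : Fin 2 → ℝ => (G.map (Int.cast : ℤ → ℝ)) *ᵥ u) ''
            {u : Fin 2 → ℝ | u ⬝ᵥ (D *ᵥ u) ≤ 1})}).toReal
        ≥ 1 / 2 :=
  stmt8_general D hpd hdet
end

section
/- Let A = [x₀, x₁] and B = [y₀, y₁] be closed real intervals with lengths δ = x₁ - x₀ and Δ = y₁ - y₀. If δ·Δ ≥ (1 + √2)², then there exists at least one u ∈ Z[√2] with u ∈ A and u• ∈ B. -/
private lemma sqrt2_mul_self : Real.sqrt 2 * Real.sqrt 2 = 2 :=
  Real.mul_self_sqrt (by norm_num)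

/-- Key case: both intervals have length at least 1. -/
private lemma key13 (x₀ x₁ y₀ y₁ : ℝ) (hx : 1 ≤ x₁ - x₀) (hy : 1 ≤ y₁ - y₀)
    (h : (1 + Real.sqrt 2) ^ 2 ≤ (x₁ - x₀) * (y₁ - y₀)) :
    ∃ a b : ℤ,
      (a : ℝ) + (b : ℝ) * Real.sqrt 2 ∈ Set.Icc x₀ x₁ ∧
      (a : ℝ) - (b : ℝ) * Real.sqrt 2 ∈ Set.Icc y₀ y₁ := by
  set s2 := Real.sqrt 2 with hs2def
  have h2 : s2 * s2 = 2 := sqrt2_mul_self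
  have hs2nn : 0 ≤ s2 := Real.sqrt_nonneg 2
  have hpos : (0:ℝ) < 2 * s2 := by nlinarith
  -- AM-GM : δ + Δ ≥ 2(1+√2)
  have hsum : 2 * (1 + s2) ≤ (x₁ - x₀) + (y₁ - y₀) := by
    have hu : Real.sqrt (x₁ - x₀) * Real.sqrt (x₁ - x₀) = x₁ - x₀ :=
      Real.mul_self_sqrt (by linarith)
    have hv : Real.sqrt (y₁ - y₀) * Real.sqrt (y₁ - y₀) = y₁ - y₀ :=
      Real.mul_self_sqrt (by linarith)
    have huv : 1 + s2 ≤ Real.sqrt (x₁ - x₀) * Real.sqrt (y₁ - y₀) := by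
      rw [← Real.sqrt_mul (by linarith)]
      have : 1 + s2 = Real.sqrt ((1 + s2) ^ 2) :=
        (Real.sqrt_sq (by linarith)).symm
      rw [this]
      exact Real.sqrt_le_sqrt h
    nlinarith [sq_nonneg (Real.sqrt (x₁ - x₀) - Real.sqrt (y₁ - y₀))]
  -- choose b
  set b : ℤ := ⌈(x₀ - y₁ + 1) / (2 * s2)⌉ with hbdef
  have hb1 : x₀ - y₁ + 1 ≤ (b:ℝ) * (2 * s2) := by
    have := Int.le_ceil ((x₀ - y₁ + 1) / (2 * s2))
    rw [div_le_iff₀ hpos] at this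
    linarith
  have hb2 : (b:ℝ) * (2 * s2) ≤ x₁ - y₀ - 1 := by
    have hlt : (b:ℝ) < (x₀ - y₁ + 1) / (2 * s2) + 1 := Int.ceil_lt_add_one _
    have : (b:ℝ) * (2 * s2) < (x₀ - y₁ + 1) + 2 * s2 := by
      have := mul_lt_mul_of_pos_right hlt hpos
      rw [add_mul, div_mul_cancel₀ _ (ne_of_gt hpos), one_mul] at this
      linarith
    linarith
  have hb1' : x₀ - y₁ + 1 ≤ 2 * ((b:ℝ) * s2) := by nlinarith
  have hb2' : 2 * ((b:ℝ) * s2) ≤ x₁ - y₀ - 1 := by nlinarith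
  -- choose a
  set L : ℝ := max (x₀ - (b:ℝ) * s2) (y₀ + (b:ℝ) * s2) with hLdef
  set a : ℤ := ⌈L⌉ with hadef
  have ha1 : x₀ - (b:ℝ) * s2 ≤ (a:ℝ) := le_trans (le_max_left _ _) (Int.le_ceil L)
  have ha2 : y₀ + (b:ℝ) * s2 ≤ (a:ℝ) := le_trans (le_max_right _ _) (Int.le_ceil L)
  have haL : (a:ℝ) < L + 1 := Int.ceil_lt_add_one L
  have hLx : L ≤ x₁ - (b:ℝ) * s2 - 1 :=
    max_le (by linarith) (by linarith)
  have hLy : L ≤ y₁ + (b:ℝ) * s2 - 1 :=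
    max_le (by linarith) (by linarith)
  refine ⟨a, b, ⟨by linarith, by linarith⟩, ⟨by linarith, by linarith⟩⟩

/-- Powers of the unit 3+2√2 have integer coordinates, with conjugate inverse. -/
private lemma unit_pow_nat (m : ℕ) : ∃ c d : ℤ,
    ((3:ℝ) + 2 * Real.sqrt 2) ^ m = (c:ℝ) + (d:ℝ) * Real.sqrt 2 ∧
    ((3:ℝ) - 2 * Real.sqrt 2) ^ m = (c:ℝ) - (d:ℝ) * Real.sqrt 2 := by
  induction m with
  | zero => exact ⟨1, 0, by norm_num, by norm_num⟩
  | succ n ih =>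
    obtain ⟨c, d, h1, h2⟩ := ih
    refine ⟨3 * c + 4 * d, 2 * c + 3 * d, ?_, ?_⟩
    · rw [pow_succ, h1]; push_cast
      linear_combination (2 * (d:ℝ)) * sqrt2_mul_self
    · rw [pow_succ, h2]; push_cast
      linear_combination (2 * (d:ℝ)) * sqrt2_mul_self

private lemma unit_zpow (n : ℤ) : ∃ c d : ℤ,
    ((3:ℝ) + 2 * Real.sqrt 2) ^ n = (c:ℝ) + (d:ℝ) * Real.sqrt 2 ∧
    ((3:ℝ) + 2 * Real.sqrt 2) ^ (-n) = (c:ℝ) - (d:ℝ) * Real.sqrt 2 := by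
  have hmul : ((3:ℝ) + 2 * Real.sqrt 2) * ((3:ℝ) - 2 * Real.sqrt 2) = 1 := by
    linear_combination (-4:ℝ) * sqrt2_mul_self
  have hne : ((3:ℝ) + 2 * Real.sqrt 2) ≠ 0 := by
    nlinarith [Real.sqrt_nonneg 2]
  have hinv : ((3:ℝ) + 2 * Real.sqrt 2)⁻¹ = (3:ℝ) - 2 * Real.sqrt 2 :=
    eq_comm.mp (eq_inv_of_mul_eq_one_right (by linear_combination hmul))
  obtain ⟨m, rfl | rfl⟩ := Int.eq_nat_or_neg n
  · obtain ⟨c, d, h1, h2⟩ := unit_pow_nat m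
    refine ⟨c, d, ?_, ?_⟩
    · rw [zpow_natCast]; exact h1
    · rw [zpow_neg, zpow_natCast, ← inv_pow, hinv]; exact h2
  · obtain ⟨c, d, h1, h2⟩ := unit_pow_nat m
    refine ⟨c, -d, ?_, ?_⟩
    · rw [zpow_neg, zpow_natCast, ← inv_pow, hinv, h2]; push_cast; ring
    · rw [neg_neg, zpow_natCast, h1]; push_cast; ring

/-- If δ·Δ ≥ (1+√2)² then the one-dimensional grid problem for A = [x₀,x₁],
    B = [y₀,y₁] has at least one solution in Z[√2]. -/
theorem stmt13 (x₀ x₁ y₀ y₁ : ℝ) (hx : x₀ ≤ x₁) (hy : y₀ ≤ y₁)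
    (h : (1 + Real.sqrt 2) ^ 2 ≤ (x₁ - x₀) * (y₁ - y₀)) :
    ∃ a b : ℤ,
      (a : ℝ) + (b : ℝ) * Real.sqrt 2 ∈ Set.Icc x₀ x₁ ∧
      (a : ℝ) - (b : ℝ) * Real.sqrt 2 ∈ Set.Icc y₀ y₁ := by
  have h2 : Real.sqrt 2 * Real.sqrt 2 = 2 := sqrt2_mul_self
  have hs2nn : 0 ≤ Real.sqrt 2 := Real.sqrt_nonneg 2
  set μ : ℝ := 3 + 2 * Real.sqrt 2 with hμdef
  have hμsq : (1 + Real.sqrt 2) ^ 2 = μ := by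
    rw [hμdef]; linear_combination h2
  have hμ1 : 1 < μ := by rw [hμdef]; nlinarith
  have hμpos : 0 < μ := by linarith
  have hδ : 0 < x₁ - x₀ := by
    rcases lt_or_eq_of_le hx with h' | h'
    · linarith
    · exfalso; rw [← h'] at h; nlinarith
  have hΔ : 0 < y₁ - y₀ := by
    rcases lt_or_eq_of_le hy with h' | h'
    · linarith
    · exfalso; rw [← h'] at h; nlinarith
  obtain ⟨n, hn1, hn2⟩ := exists_mem_Ico_zpow hδ hμ1
  set s : ℝ := μ ^ (-n) with hsdef
  set t : ℝ := μ ^ n with htdef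
  have hspos : 0 < s := zpow_pos hμpos _
  have htpos : 0 < t := zpow_pos hμpos _
  have hst : s * t = 1 := by
    rw [hsdef, htdef, ← zpow_add₀ (ne_of_gt hμpos)]; simp
  -- the scaled problem
  have hδ' : 1 ≤ s * x₁ - s * x₀ := by
    have := mul_le_mul_of_nonneg_left hn1 hspos.le
    rw [show s * t = 1 from hst] at *
    have h1 : s * (μ ^ n) = 1 := by
      rw [hsdef, ← zpow_add₀ (ne_of_gt hμpos)]; simp
    nlinarith
  have hδ'lt : s * x₁ - s * x₀ < μ := by
    have := mul_lt_mul_of_pos_left hn2 hspos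
    have h1 : s * (μ ^ (n + 1)) = μ := by
      rw [hsdef, ← zpow_add₀ (ne_of_gt hμpos)]; simp [zpow_one]
    nlinarith
  have hprod : (s * x₁ - s * x₀) * (t * y₁ - t * y₀) = (x₁ - x₀) * (y₁ - y₀) := by
    have : (s * x₁ - s * x₀) * (t * y₁ - t * y₀) = (s * t) * ((x₁ - x₀) * (y₁ - y₀)) := by
      ring
    rw [this, hst, one_mul]
  have hΔ' : 1 ≤ t * y₁ - t * y₀ := by
    by_contra hcon
    push_neg at hcon
    have hΔ'pos : 0 < t * y₁ - t * y₀ := by nlinarith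
    have : (s * x₁ - s * x₀) * (t * y₁ - t * y₀) < μ := by nlinarith
    rw [hprod, ← hμsq] at this
    linarith
  obtain ⟨a', b', ⟨hx1, hx2⟩, ⟨hy1, hy2⟩⟩ :=
    key13 (s * x₀) (s * x₁) (t * y₀) (t * y₁) hδ' hΔ' (by rw [hprod]; exact h)
  obtain ⟨c, d, hcd1, hcd2⟩ := unit_zpow n
  refine ⟨c * a' + 2 * d * b', d * a' + c * b', ⟨?_, ?_⟩, ⟨?_, ?_⟩⟩
  · -- x₀ ≤ a + b√2
    have e1 : ((c * a' + 2 * d * b' : ℤ) : ℝ) + ((d * a' + c * b' : ℤ) : ℝ) * Real.sqrt 2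
        = t * ((a':ℝ) + (b':ℝ) * Real.sqrt 2) := by
      rw [htdef, hcd1]; push_cast
      linear_combination (-(d:ℝ) * (b':ℝ)) * h2
    rw [e1]
    have := mul_le_mul_of_nonneg_left hx1 htpos.le
    have ht1 : t * (s * x₀) = x₀ := by
      rw [show t * (s * x₀) = (s * t) * x₀ by ring, hst, one_mul]
    linarith
  · have e1 : ((c * a' + 2 * d * b' : ℤ) : ℝ) + ((d * a' + c * b' : ℤ) : ℝ) * Real.sqrt 2
        = t * ((a':ℝ) + (b':ℝ) * Real.sqrt 2) := by
      rw [htdef, hcd1]; push_cast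
      linear_combination (-(d:ℝ) * (b':ℝ)) * h2
    rw [e1]
    have := mul_le_mul_of_nonneg_left hx2 htpos.le
    have ht1 : t * (s * x₁) = x₁ := by
      rw [show t * (s * x₁) = (s * t) * x₁ by ring, hst, one_mul]
    linarith
  · have e2 : ((c * a' + 2 * d * b' : ℤ) : ℝ) - ((d * a' + c * b' : ℤ) : ℝ) * Real.sqrt 2
        = s * ((a':ℝ) - (b':ℝ) * Real.sqrt 2) := by
      rw [hsdef, hcd2]; push_cast
      linear_combination (-(d:ℝ) * (b':ℝ)) * h2
    rw [e2]
    have := mul_le_mul_of_nonneg_left hy1 hspos.le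
    have ht1 : s * (t * y₀) = y₀ := by
      rw [show s * (t * y₀) = (s * t) * y₀ by ring, hst, one_mul]
    linarith
  · have e2 : ((c * a' + 2 * d * b' : ℤ) : ℝ) - ((d * a' + c * b' : ℤ) : ℝ) * Real.sqrt 2
        = s * ((a':ℝ) - (b':ℝ) * Real.sqrt 2) := by
      rw [hsdef, hcd2]; push_cast
      linear_combination (-(d:ℝ) * (b':ℝ)) * h2
    rw [e2]
    have := mul_le_mul_of_nonneg_left hy2 hspos.le
    have ht1 : s * (t * y₁) = y₁ := by
      rw [show s * (t * y₁) = (s * t) * y₁ by ring, hst, one_mul]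
    linarith
end

section
/- Let U, W ∈ SU(2) ⊆ U(2) be 2×2 unitary matrices with det W = 1 and trace(W) real and nonnegative. Then for every unit complex scalar λ, the operator norm satisfies ‖I - W‖ ≤ ‖I - λW‖. -/
/-- The operator norm of a 2×2 complex matrix, acting on ℂ². -/
noncomputable def opNorm (M : Matrix (Fin 2) (Fin 2) ℂ) : ℝ :=
  ‖Matrix.toEuclideanCLM (𝕜 := ℂ) (n := Fin 2) M‖

/-!
For unitary `U`, `(1 - U)ᴴ (1 - U) = 2 - (U + Uᴴ)`. In `SU(2)` the adjoint is the adjugate, so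
`W + Wᴴ = tr W • 1` and `‖1 - W‖² = 2 - tr W` exactly. For `λW`, which is again unitary, only the
trace survives: the trace of the Gram matrix is `2 (2 - Re (λ tr W))`, and since a diagonal entry
of a matrix is bounded by its operator norm, `‖1 - λW‖² ≥ 2 - Re λ · tr W ≥ 2 - tr W`.
-/

open scoped Matrix.Norms.L2Operator

theorem opNorm_eq_l2_opNorm (M : Matrix (Fin 2) (Fin 2) ℂ) : opNorm M = ‖M‖ := rfl

theorem star_one_sub_mul_one_sub_of_mem_unitary {R : Type*} [Ring R] [StarRing R] {U : R}
    (hU : U ∈ unitary R) : star (1 - U) * (1 - U) = 2 - (U + star U) := by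
  rw [star_sub, star_one, sub_mul, mul_sub, mul_sub, Unitary.star_mul_self_of_mem hU,
    ← one_add_one_eq_two]
  noncomm_ring

namespace Matrix

variable {n 𝕜 : Type*} [Fintype n] [DecidableEq n]

theorem star_eq_adjugate_of_mem_unitaryGroup {α : Type*} [CommRing α] [StarRing α]
    {A : Matrix n n α} (hA : A ∈ unitaryGroup n α) (hdet : A.det = 1) : star A = A.adjugate :=
  calc star A = star A * (A * A.adjugate) := by rw [mul_adjugate, hdet, one_smul, mul_one]
    _ = A.adjugate := by rw [← mul_assoc, Unitary.star_mul_self_of_mem hA, one_mul]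

theorem add_adjugate_fin_two {α : Type*} [CommRing α] (A : Matrix (Fin 2) (Fin 2) α) :
    A + A.adjugate = A.trace • 1 := by
  ext i j
  fin_cases i <;> fin_cases j <;> simp [adjugate_fin_two, trace_fin_two, add_comm]

variable [RCLike 𝕜]

theorem norm_entry_le_l2_opNorm {m : Type*} [Fintype m] (A : Matrix m n 𝕜) (i : m) (j : n) :
    ‖A i j‖ ≤ ‖A‖ := by
  have h := A.l2_opNorm_mulVec (EuclideanSpace.single j 1)
  rw [PiLp.norm_single, norm_one, mul_one] at h
  refine le_trans (le_of_eq ?_) ((PiLp.norm_apply_le _ i).trans h)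
  simp [mulVec_single]

theorem re_trace_le_card_mul_l2_opNorm (A : Matrix n n 𝕜) :
    RCLike.re A.trace ≤ Fintype.card n * ‖A‖ :=
  calc RCLike.re A.trace = ∑ i, RCLike.re (A i i) := by simp [trace]
    _ ≤ ∑ _i : n, ‖A‖ := Finset.sum_le_sum fun i _ =>
        (RCLike.re_le_norm _).trans (norm_entry_le_l2_opNorm A i i)
    _ = Fintype.card n * ‖A‖ := by simp

open scoped ComplexOrder in
theorem l2_opNorm_sq_eq_of_conjTranspose_mul_self_eq [Nonempty n] {A : Matrix n n 𝕜} {c : ℝ}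
    (h : Aᴴ * A = (c : 𝕜) • 1) : ‖A‖ ^ 2 = c := by
  obtain ⟨i⟩ := ‹Nonempty n›
  have hc : 0 ≤ c := by
    simpa [h] using (posSemidef_conjTranspose_mul_self A).diag_nonneg (i := i)
  rw [sq, ← l2_opNorm_conjTranspose_mul_self, h, norm_smul, CStarRing.norm_one, mul_one,
    RCLike.norm_ofReal, abs_of_nonneg hc]

theorem re_trace_conjTranspose_one_sub_mul_one_sub {U : Matrix n n 𝕜}
    (hU : U ∈ unitaryGroup n 𝕜) :
    RCLike.re ((1 - U)ᴴ * (1 - U)).trace = 2 * (Fintype.card n - RCLike.re U.trace) := by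
  rw [← star_eq_conjTranspose, star_one_sub_mul_one_sub_of_mem_unitary hU, ← one_add_one_eq_two]
  simp [trace_sub, trace_add, star_eq_conjTranspose, trace_conjTranspose]
  ring

theorem card_sub_re_trace_le_l2_opNorm_one_sub_sq {U : Matrix n n 𝕜}
    (hU : U ∈ unitaryGroup n 𝕜) :
    2 * (Fintype.card n - RCLike.re U.trace) ≤ Fintype.card n * ‖1 - U‖ ^ 2 := by
  rw [← re_trace_conjTranspose_one_sub_mul_one_sub hU, sq, ← l2_opNorm_conjTranspose_mul_self]
  exact re_trace_le_card_mul_l2_opNorm _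

theorem conjTranspose_one_sub_mul_one_sub_of_det_eq_one {W : Matrix (Fin 2) (Fin 2) 𝕜}
    (hW : W ∈ unitaryGroup (Fin 2) 𝕜) (hdet : W.det = 1) :
    (1 - W)ᴴ * (1 - W) = (2 - W.trace) • 1 := by
  rw [← star_eq_conjTranspose, star_one_sub_mul_one_sub_of_mem_unitary hW,
    star_eq_adjugate_of_mem_unitaryGroup hW hdet, add_adjugate_fin_two, sub_smul, two_smul,
    one_add_one_eq_two]

end Matrix

open Matrix in
/-- If W is a 2×2 unitary with det W = 1 and real nonnegative trace, then
    ‖I - W‖ ≤ ‖I - λW‖ for every unit scalar λ. -/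
theorem stmt16 (W : Matrix (Fin 2) (Fin 2) ℂ)
    (hW : W ∈ Matrix.unitaryGroup (Fin 2) ℂ) (hdet : W.det = 1)
    (htr_im : W.trace.im = 0) (htr_re : 0 ≤ W.trace.re) :
    ∀ l : ℂ, ‖l‖ = 1 → opNorm (1 - W) ≤ opNorm (1 - l • W) := by
  intro l hl
  set t := W.trace.re
  have htr : W.trace = t := Complex.ext rfl htr_im
  have hl_unitary : l ∈ unitary ℂ := by
    rw [Unitary.mem_iff_star_mul_self, RCLike.star_def, RCLike.conj_mul, hl]; simp
  have hlW : l • W ∈ unitaryGroup (Fin 2) ℂ := Unitary.smul_mem_of_mem hl_unitary hW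
  have hW_sq : ‖1 - W‖ ^ 2 = 2 - t := l2_opNorm_sq_eq_of_conjTranspose_mul_self_eq <| by
    rw [conjTranspose_one_sub_mul_one_sub_of_det_eq_one hW hdet, htr]; norm_cast
  have hlW_sq : 2 * (2 - l.re * t) ≤ 2 * ‖1 - l • W‖ ^ 2 := by
    simpa [trace_smul, htr] using card_sub_re_trace_le_l2_opNorm_one_sub_sq hlW
  have hre : l.re * t ≤ t := mul_le_of_le_one_left htr_re (hl ▸ Complex.re_le_norm l)
  rw [opNorm_eq_l2_opNorm, opNorm_eq_l2_opNorm]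
  exact (pow_le_pow_iff_left₀ (norm_nonneg _) (norm_nonneg _) two_ne_zero).mp (by linarith)
end

section
/- Let R_z(θ) = diag(e^{-iθ/2}, e^{iθ/2}) and let U = (1/r)·[[α, -β†],[β, α†]] be a unitary matrix with r > 0, |α|² + |β|² = r². Then ‖U - R_z(θ)‖² = 2 - 2·Re(e^{iθ/2}·α/r), where ‖·‖ is the operator norm. Consequently, ‖U - R_z(θ)‖ ≤ ε if and only if Re(e^{iθ/2}·α/r) ≥ 1 - ε²/2. -/
open Complex ComplexConjugate
open scoped Matrix

theorem Matrix.norm_toEuclideanCLM_sq_of_conjTranspose_mul_self {𝕜 n : Type*} [RCLike 𝕜]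
    [Fintype n] [DecidableEq n] [Nonempty n] (M : Matrix n n 𝕜) {c : ℝ} (hc : 0 ≤ c)
    (h : Mᴴ * M = (c : 𝕜) • 1) : ‖Matrix.toEuclideanCLM (𝕜 := 𝕜) M‖ ^ 2 = c := by
  rw [sq, ← CStarRing.norm_star_mul_self, ← map_star, ← map_mul, star_eq_conjTranspose, h,
    map_smul, map_one, ← Algebra.algebraMap_eq_smul_one, norm_algebraMap', RCLike.norm_ofReal,
    abs_of_nonneg hc]

def cayleyKlein (a b : ℂ) : Matrix (Fin 2) (Fin 2) ℂ :=
  !![a, -conj b; b, conj a]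

theorem cayleyKlein_sub (a b c d : ℂ) :
    cayleyKlein a b - cayleyKlein c d = cayleyKlein (a - c) (b - d) := by
  ext i j; fin_cases i <;> fin_cases j <;> simp [cayleyKlein, neg_add_eq_sub]

theorem ofReal_smul_cayleyKlein (t : ℝ) (a b : ℂ) :
    (t : ℂ) • cayleyKlein a b = cayleyKlein (t * a) (t * b) := by
  ext i j; fin_cases i <;> fin_cases j <;> simp [cayleyKlein, mul_comm]

theorem conjTranspose_cayleyKlein_mul_self (a b : ℂ) :
    (cayleyKlein a b)ᴴ * cayleyKlein a b = ((normSq a + normSq b : ℝ) : ℂ) • 1 := by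
  ext i j
  fin_cases i <;> fin_cases j <;>
    simp [cayleyKlein, Matrix.mul_apply, normSq_eq_conj_mul_self] <;> ring

theorem opNorm_cayleyKlein_sq (a b : ℂ) :
    opNorm (cayleyKlein a b) ^ 2 = normSq a + normSq b :=
  Matrix.norm_toEuclideanCLM_sq_of_conjTranspose_mul_self _
    (add_nonneg (normSq_nonneg a) (normSq_nonneg b)) (conjTranspose_cayleyKlein_mul_self a b)

theorem normSq_sub_add_normSq {a b z : ℂ} (hz : ‖z‖ = 1) (hab : normSq a + normSq b = 1) :
    normSq (a - z) + normSq b = 2 - 2 * (conj z * a).re := by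
  rw [normSq_sub, normSq_eq_norm_sq z, hz, mul_comm (conj z)]
  linarith

/-- For U = (1/r)[[α, -β†],[β, α†]] unitary and R_z(θ) = diag(e^{-iθ/2}, e^{iθ/2}),
    ‖U - R_z(θ)‖² = 2 - 2Re(e^{iθ/2}α/r); consequently ‖U - R_z(θ)‖ ≤ ε iff
    Re(e^{iθ/2}α/r) ≥ 1 - ε²/2. -/
theorem stmt17 (θ r : ℝ) (α β : ℂ) (hr : 0 < r)
    (hnorm : ‖α‖ ^ 2 + ‖β‖ ^ 2 = r ^ 2)
    (U Rz : Matrix (Fin 2) (Fin 2) ℂ)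
    (hU : U = ((r : ℂ))⁻¹ • !![α, -(starRingEnd ℂ) β; β, (starRingEnd ℂ) α])
    (hRz : Rz = !![Complex.exp (-(Complex.I * θ) / 2), 0;
                   0, Complex.exp (Complex.I * θ / 2)]) :
    opNorm (U - Rz) ^ 2 = 2 - 2 * (Complex.exp (Complex.I * θ / 2) * α / r).re ∧
    ∀ ε : ℝ, 0 ≤ ε →
      (opNorm (U - Rz) ≤ ε ↔
        (Complex.exp (Complex.I * θ / 2) * α / r).re ≥ 1 - ε ^ 2 / 2) := by
  set z := exp (-(I * θ) / 2) with hz_def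
  have hz : ‖z‖ = 1 := by
    rw [hz_def, show -(I * θ) / 2 = ((-θ / 2 : ℝ) : ℂ) * I by push_cast; ring]
    exact norm_exp_ofReal_mul_I _
  have hconj : conj z = exp (I * θ / 2) := by
    rw [hz_def, ← exp_conj]; congr 1; simp [conj_ofReal, map_ofNat]
  have hRz' : Rz = cayleyKlein z 0 := by rw [hRz, ← hconj]; simp [cayleyKlein]
  have hU' : U = cayleyKlein (α / r) (β / r) := by
    rw [hU, ← ofReal_inv]
    change (_ : ℂ) • cayleyKlein α β = _
    rw [ofReal_smul_cayleyKlein]; simp only [ofReal_inv, div_eq_inv_mul]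
  have hunit : normSq (α / r) + normSq (β / r) = 1 := by
    rw [normSq_div, normSq_div, ← add_div, normSq_eq_norm_sq α, normSq_eq_norm_sq β, hnorm,
      normSq_ofReal]
    field_simp
  have hsq : opNorm (U - Rz) ^ 2 = 2 - 2 * (exp (I * θ / 2) * α / r).re := by
    rw [hU', hRz', cayleyKlein_sub, sub_zero, opNorm_cayleyKlein_sq,
      normSq_sub_add_normSq hz hunit, hconj, ← mul_div_assoc]
  refine ⟨hsq, fun ε hε => ?_⟩
  unfold opNorm at hsq ⊢
  rw [← pow_le_pow_iff_left₀ (norm_nonneg _) hε two_ne_zero, hsq]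
  constructor <;> intro h <;> linarith
end
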